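/- The almost disjoint coding poset P₄ satisfies the countable chain condition: every antichain in P₄ (a set of pairwise incompatible conditions) is countable. -/
import Mathlib


open Cardinal Set

/-- A condition in the almost disjoint coding poset `P₄`: a pair `(l, r)` where
`l : n → 2` (for some `n < ω`) is coded by its domain `n` together with the set
`ones = {γ < n : l γ = 1}`, and `r` is a finite subset of `ω₁`. -/
structure P4Cond (a : Ordinal → Set ℕ) (D : Set Ordinal) where
  dom : ℕ
  ones : Set ℕ
  ones_sub : ones ⊆ Set.Iio dom
  r : Finset Ordinal
  r_sub : ↑r ⊆ Set.Iio (aleph 1).ord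

/-- The order on `P₄`: `p ≤ q` iff `l(p) ⊇ l(q)`, `r(p) ⊇ r(q)`, and for every
`β ∈ r(q)` with `β ∈ D`, `{γ ∈ dom(l(p)) ∖ dom(l(q)) : l(p)(γ) = 1} ∩ a_β = ∅`. -/
def P4le (a : Ordinal → Set ℕ) (D : Set Ordinal) (p q : P4Cond a D) : Prop :=
  q.dom ≤ p.dom ∧ p.ones ∩ Set.Iio q.dom = q.ones ∧ q.r ⊆ p.r ∧
    ∀ β ∈ q.r, β ∈ D → (p.ones \ Set.Iio q.dom) ∩ a β = ∅

/-- `P₄` satisfies the countable chain condition: every set of pairwise incompatible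
conditions is countable. -/
theorem P4_ccc (a : Ordinal → Set ℕ) (D : Set Ordinal)
    (S : Set (P4Cond a D))
    (hanti : ∀ p ∈ S, ∀ q ∈ S, p ≠ q →
      ¬ ∃ s : P4Cond a D, P4le a D s p ∧ P4le a D s q) :
    S.Countable := by
  -- Two conditions with the same `dom` and `ones` are compatible.
  have key : ∀ p ∈ S, ∀ q ∈ S, p.dom = q.dom → p.ones = q.ones → p = q := by
    intro p hp q hq hdom hones
    by_contra hne
    apply hanti p hp q hq hne
    refine ⟨⟨p.dom, p.ones, p.ones_sub, p.r ∪ q.r, ?_⟩, ?_, ?_⟩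
    · intro x hx
      rcases Finset.mem_union.mp hx with h | h
      · exact p.r_sub h
      · exact q.r_sub h
    · refine ⟨le_rfl, ?_, Finset.subset_union_left, ?_⟩
      · exact Set.inter_eq_left.mpr p.ones_sub
      · intro β _ _
        have : p.ones \ Set.Iio (p.dom : ℕ) = ∅ :=
          Set.diff_eq_empty.mpr p.ones_sub
        simp [this]
    · refine ⟨hdom.ge, ?_, Finset.subset_union_right, ?_⟩
      · rw [← hdom, Set.inter_eq_left.mpr p.ones_sub, hones]
      · intro β _ _
        have : p.ones \ Set.Iio (q.dom : ℕ) = ∅ := by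
          rw [← hdom]; exact Set.diff_eq_empty.mpr p.ones_sub
        simp [this]
  -- Inject S into ℕ × Finset ℕ.
  have : ∀ p : P4Cond a D, p.ones.Finite :=
    fun p => (Set.finite_Iio p.dom).subset p.ones_sub
  rw [← Set.countable_coe_iff]
  have hinj : Function.Injective
      (fun p : S => ((p : P4Cond a D).dom, (this p).toFinset)) := by
    intro p q h
    have h1 : (p : P4Cond a D).dom = (q : P4Cond a D).dom :=
      (Prod.mk.injEq _ _ _ _).mp h |>.1
    have h2 : (p : P4Cond a D).ones = (q : P4Cond a D).ones := by
      have := (Prod.mk.injEq _ _ _ _).mp h |>.2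
      have := congrArg (fun s : Finset ℕ => (s : Set ℕ)) this
      simpa using this
    exact Subtype.ext (key p p.2 q q.2 h1 h2)
  exact Countable.of_equiv _ (Equiv.ofInjective _ hinj).symm
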